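/- Let a ∈ ℝ^d with a ≠ 0 and let f : ℝ^d → ℝ be given by f(x) = log(1 + exp(−⟨a, x⟩)). Then inf f = 0 and for every x ∈ ℝ^d: ⟨∇f(x), ∇²f(x)∇f(x)⟩ / ‖∇f(x)‖² ≤ (2/(3√3))·‖a‖²·√(f(x)). -/

import Mathlib

open scoped RealInnerProductSpace

/-!
`f` is the ridge function `x ↦ ℓ ⟪a, x⟫` with `ℓ t = log (1 + e⁻ᵗ) = -log σ(t)`. Its gradient is
`ℓ'(s) a` and its Hessian `ℓ''(s) a aᵀ`, so the curvature along the gradient is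
`ℓ''(s) ‖a‖² = σ(s) σ(-s) ‖a‖²`. Writing `u = σ(-s)`, we have `ℓ(s) = -log (1 - u) ≥ u`, and
`u (1 - u) = √u · √u (1 - √u²) ≤ (2 / (3√3)) √u` because `v (1 - v²)` peaks at `v = 1/√3`.
The infimum is `0` because `⟪a, ·⟫` maps onto `ℝ` and `ℓ` decreases to `0`.
-/

open Real Filter Topology

noncomputable def logisticLoss (t : ℝ) : ℝ := log (1 + exp (-t))

lemma logisticLoss_eq_neg_log_sigmoid (t : ℝ) : logisticLoss t = -log (sigmoid t) := by
  rw [logisticLoss, sigmoid_def, log_inv, neg_neg]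

lemma antitone_logisticLoss : Antitone logisticLoss := fun _ _ hst =>
  log_le_log (by positivity) (by gcongr)

lemma tendsto_logisticLoss_atTop : Tendsto logisticLoss atTop (𝓝 0) := by
  rw [funext logisticLoss_eq_neg_log_sigmoid]
  simpa using ((continuousAt_log one_ne_zero).tendsto.comp tendsto_sigmoid_atTop).neg

lemma iInf_logisticLoss : ⨅ t, logisticLoss t = 0 :=
  (isGLB_of_tendsto_atTop antitone_logisticLoss tendsto_logisticLoss_atTop).ciInf_eq

lemma hasDerivAt_logisticLoss (t : ℝ) : HasDerivAt logisticLoss (-sigmoid (-t)) t := by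
  have h := ((hasDerivAt_sigmoid t).log (sigmoid_pos t).ne').neg
  rw [mul_div_cancel_left₀ _ (sigmoid_pos t).ne', ← sigmoid_neg] at h
  rwa [funext logisticLoss_eq_neg_log_sigmoid]

lemma hasDerivAt_neg_sigmoid_neg (t : ℝ) :
    HasDerivAt (fun s => -sigmoid (-s)) (sigmoid t * sigmoid (-t)) t := by
  refine ((hasDerivAt_sigmoid (-t)).comp t (hasDerivAt_neg t)).neg.congr_deriv ?_
  rw [← sigmoid_neg, neg_neg]
  ring

lemma sigmoid_neg_le_logisticLoss (t : ℝ) : sigmoid (-t) ≤ logisticLoss t := by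
  rw [logisticLoss_eq_neg_log_sigmoid, sigmoid_neg]
  linarith [log_le_sub_one_of_pos (sigmoid_pos t)]

lemma mul_one_sub_sq_le {v : ℝ} (hv : 0 ≤ v) : v * (1 - v ^ 2) ≤ 2 / (3 * √3) := by
  have hsqrt3 : √3 ^ 2 = 3 := sq_sqrt (by norm_num)
  have key : 2 - v * (1 - v ^ 2) * (3 * √3) = (√3 * v - 1) ^ 2 * (√3 * v + 2) := by
    linear_combination (-√3 * v ^ 3) * hsqrt3
  have : 0 ≤ (√3 * v - 1) ^ 2 * (√3 * v + 2) := by positivity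
  rw [le_div_iff₀ (by positivity)]
  linarith

lemma sigmoid_mul_sigmoid_neg_le (t : ℝ) :
    sigmoid t * sigmoid (-t) ≤ 2 / (3 * √3) * √(logisticLoss t) := by
  have hu : 0 ≤ sigmoid (-t) := sigmoid_nonneg _
  set u := sigmoid (-t)
  have hv : √u * (1 - √u ^ 2) ≤ 2 / (3 * √3) := mul_one_sub_sq_le (sqrt_nonneg u)
  rw [sq_sqrt hu] at hv
  have ht : sigmoid t = 1 - u := by rw [← sigmoid_neg, neg_neg]
  calc sigmoid t * u = √u * (√u * (1 - u)) := by
        rw [← mul_assoc, mul_self_sqrt hu, ht, mul_comm]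
    _ ≤ √u * (2 / (3 * √3)) := by gcongr
    _ ≤ 2 / (3 * √3) * √(logisticLoss t) := by
        rw [mul_comm]
        gcongr
        exact sigmoid_neg_le_logisticLoss t

section Ridge

variable {E : Type*} [NormedAddCommGroup E] [InnerProductSpace ℝ E]

lemma surjective_inner_right {a : E} (ha : a ≠ 0) : Function.Surjective fun x : E => ⟪a, x⟫ :=
  fun t => ⟨(t / ‖a‖ ^ 2) • a, by
    show ⟪a, (t / ‖a‖ ^ 2) • a⟫ = t
    rw [real_inner_smul_right, real_inner_self_eq_norm_sq,
      div_mul_cancel₀ _ (pow_ne_zero 2 (norm_ne_zero_iff.2 ha))]⟩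

variable [CompleteSpace E]

/-- By the convention `0 / 0 = 0` this is `0` at critical points. -/
noncomputable def gradientCurvature (f : E → ℝ) (x : E) : ℝ :=
  ⟪gradient f x, fderiv ℝ (gradient f) x (gradient f x)⟫ / ‖gradient f x‖ ^ 2

lemma HasDerivAt.hasGradientAt_comp_inner {g : ℝ → ℝ} {g' : ℝ} {a x : E}
    (hg : HasDerivAt g g' ⟪a, x⟫) : HasGradientAt (fun y => g ⟪a, y⟫) (g' • a) x := by
  have hdual : InnerProductSpace.toDual ℝ E (g' • a) = g' • innerSL ℝ a := by
    ext v
    simp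
  rw [hasGradientAt_iff_hasFDerivAt, hdual]
  exact hg.comp_hasFDerivAt x (innerSL ℝ a).hasFDerivAt

lemma gradient_comp_inner {g g' : ℝ → ℝ} (hg : ∀ t, HasDerivAt g (g' t) t) (a : E) :
    gradient (fun y => g ⟪a, y⟫) = fun y => g' ⟪a, y⟫ • a :=
  gradient_eq fun _ => (hg _).hasGradientAt_comp_inner

lemma gradientCurvature_comp_inner {g g' : ℝ → ℝ} {g'' : ℝ} (hg : ∀ t, HasDerivAt g (g' t) t)
    {a x : E} (hg' : HasDerivAt g' g'' ⟪a, x⟫) (hne : g' ⟪a, x⟫ ≠ 0) :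
    gradientCurvature (fun y => g ⟪a, y⟫) x = g'' * ‖a‖ ^ 2 := by
  have hhess : fderiv ℝ (gradient fun y => g ⟪a, y⟫) x = (g'' • innerSL ℝ a).smulRight a := by
    rw [gradient_comp_inner hg]
    exact ((hg'.comp_hasFDerivAt x (innerSL ℝ a).hasFDerivAt).smul_const a).fderiv
  rw [gradientCurvature, hhess, gradient_comp_inner hg]
  simp only [ContinuousLinearMap.smulRight_apply, FunLike.coe_smul, Pi.smul_apply,
    innerSL_apply_apply, real_inner_smul_left, real_inner_smul_right, real_inner_self_eq_norm_sq,
    norm_smul, Real.norm_eq_abs, mul_pow, sq_abs, smul_eq_mul]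
  rcases eq_or_ne a 0 with rfl | ha
  · simp
  · field_simp

end Ridge

/-- for the logistic function `f(x) = log(1 + e^{−⟨a,x⟩})` with
`a ≠ 0`, `inf f = 0` and the directional curvature is bounded by
`(2/(3√3))‖a‖²√(f(x))`. -/
theorem logistic_directional_smoothness {d : ℕ}
    (a : EuclideanSpace ℝ (Fin d)) (ha : a ≠ 0)
    (f : EuclideanSpace ℝ (Fin d) → ℝ)
    (hf : ∀ x, f x = Real.log (1 + Real.exp (-⟪a, x⟫))) :
    (⨅ x, f x) = 0 ∧
    (∀ x : EuclideanSpace ℝ (Fin d),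
      ⟪gradient f x, fderiv ℝ (gradient f) x (gradient f x)⟫ / ‖gradient f x‖^2
        ≤ (2 / (3 * Real.sqrt 3)) * ‖a‖^2 * Real.sqrt (f x)) := by
  obtain rfl : f = fun y => logisticLoss ⟪a, y⟫ := funext hf
  refine ⟨?_, fun x => ?_⟩
  · rw [(surjective_inner_right ha).iInf_comp logisticLoss, iInf_logisticLoss]
  · calc gradientCurvature (fun y => logisticLoss ⟪a, y⟫) x
        = sigmoid ⟪a, x⟫ * sigmoid (-⟪a, x⟫) * ‖a‖ ^ 2 :=
          gradientCurvature_comp_inner hasDerivAt_logisticLoss (hasDerivAt_neg_sigmoid_neg _)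
            (neg_ne_zero.2 (sigmoid_pos _).ne')
      _ ≤ 2 / (3 * √3) * √(logisticLoss ⟪a, x⟫) * ‖a‖ ^ 2 :=
          mul_le_mul_of_nonneg_right (sigmoid_mul_sigmoid_neg_le _) (sq_nonneg _)
      _ = 2 / (3 * √3) * ‖a‖ ^ 2 * √(logisticLoss ⟪a, x⟫) := by ring
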